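/- arXiv:2211.16722 — 2 statements merged into one kernel-verified Lean document; each statement's English description precedes it below -/
import Mathlib

section
/- Let U ⊆ ℝ⁴ be open with coordinates (x⁰,x¹,x²,x³) = (t,x), let c : U → (0,∞) be smooth, and let g = diag(−c²,1,1,1) with inverse g^{−1} = diag(−c^{−2},1,1,1). Define the Christoffel symbols Γ_{αβγ} := ½(∂_αg_{βγ} + ∂_γg_{αβ} − ∂_βg_{αγ}) and the Riemann curvature tensor in coordinates by R_{μναβ} := ∂_νΓ_{μβα} − ∂_μΓ_{νβα} + g^{κλ}(Γ_{νκα}Γ_{μλβ} − Γ_{μκα}Γ_{νλβ}). Then for all spatial indices i,j,k,l ∈ {1,2,3}: R_{0i0j} = c·∂²_{ij}c, while R_{ijkl} = 0 and R_{0ijk} = 0 (hence, up to the symmetries of the curvature tensor, the only non-vanishing components are R_{0i0j} = c∂²_{ij}c). -/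
noncomputable section

open scoped BigOperators

/-- Points of ℝ⁴ with coordinates (x⁰,x¹,x²,x³) = (t,x¹,x²,x³). -/
abbrev Pt : Type := Fin 4 → ℝ

/-- Partial derivative ∂_α f. -/
def pd (f : Pt → ℝ) (α : Fin 4) (x : Pt) : ℝ :=
  fderiv ℝ f x (Pi.single α 1)

/-- The acoustic metric g = diag(−c², 1, 1, 1). -/
def gMat (c : Pt → ℝ) (α β : Fin 4) (x : Pt) : ℝ :=
  if α = β then (if α = 0 then -(c x) ^ 2 else 1) else 0

/-- The inverse metric g⁻¹ = diag(−c⁻², 1, 1, 1). -/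
def gInv (c : Pt → ℝ) (α β : Fin 4) (x : Pt) : ℝ :=
  if α = β then (if α = 0 then -((c x) ^ 2)⁻¹ else 1) else 0

/-- Vf = V^α ∂_α f. -/
def vApp (V : Pt → Fin 4 → ℝ) (f : Pt → ℝ) (x : Pt) : ℝ :=
  ∑ α, V x α * pd f α x

/-- g(V, W) = g_{αβ} V^α W^β. -/
def gPair (c : Pt → ℝ) (V W : Pt → Fin 4 → ℝ) (x : Pt) : ℝ :=
  ∑ α, ∑ β, gMat c α β x * V x α * W x β

/-- L̂^α = −g^{αβ}∂_β u. -/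
def Lhat (c u : Pt → ℝ) (x : Pt) (α : Fin 4) : ℝ :=
  -∑ β, gInv c α β x * pd u β x

/-- The inverse foliation density μ = 1/(c⁻²∂_t u). -/
def invDens (c u : Pt → ℝ) (x : Pt) : ℝ :=
  (((c x) ^ 2)⁻¹ * pd u 0 x)⁻¹

/-- L = μ L̂  (so L⁰ = 1). -/
def Lvec (c u : Pt → ℝ) (x : Pt) (α : Fin 4) : ℝ :=
  invDens c u x * Lhat c u x α

/-- T̂ = c⁻¹(∂_t − L). -/
def That (c u : Pt → ℝ) (x : Pt) (α : Fin 4) : ℝ :=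
  (c x)⁻¹ * ((if α = 0 then 1 else 0) - Lvec c u x α)

/-- T = c⁻¹ μ T̂. -/
def Tvec (c u : Pt → ℝ) (x : Pt) (α : Fin 4) : ℝ :=
  (c x)⁻¹ * invDens c u x * That c u x α

/-- L̄ = c⁻²μ L + 2T. -/
def Lbar (c u : Pt → ℝ) (x : Pt) (α : Fin 4) : ℝ :=
  ((c x) ^ 2)⁻¹ * invDens c u x * Lvec c u x α + 2 * Tvec c u x α

/-- The induced inverse metric ĝ^{αβ} = g^{αβ} + (2μ)⁻¹(L^αL̄^β + L̄^αL^β). -/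
def ghat (c u : Pt → ℝ) (α β : Fin 4) (x : Pt) : ℝ :=
  gInv c α β x + (2 * invDens c u x)⁻¹ *
    (Lvec c u x α * Lbar c u x β + Lbar c u x α * Lvec c u x β)

/-- The Christoffel symbols Γ_{αβγ} = ½(∂_α g_{βγ} + ∂_γ g_{αβ} − ∂_β g_{αγ}). -/
def Gamlow (c : Pt → ℝ) (α β γ : Fin 4) (x : Pt) : ℝ :=
  (1 / 2) * (pd (fun y => gMat c β γ y) α x + pd (fun y => gMat c α β y) γ x
    - pd (fun y => gMat c α γ y) β x)

/-- Γ^γ_{αβ} = g^{γλ} Γ_{αλβ}. -/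
def Gam (c : Pt → ℝ) (γ α β : Fin 4) (x : Pt) : ℝ :=
  ∑ l, gInv c γ l x * Gamlow c α l β x

/-- The Levi-Civita covariant derivative: (D_X V)^γ = X^α(∂_α V^γ + Γ^γ_{αβ}V^β). -/
def covD (c : Pt → ℝ) (X V : Pt → Fin 4 → ℝ) (x : Pt) (γ : Fin 4) : ℝ :=
  ∑ α, X x α * (pd (fun y => V y γ) α x + ∑ β, Gam c γ α β x * V x β)

/-- The Riemann curvature tensor in coordinates:
R_{μναβ} = ∂_νΓ_{μβα} − ∂_μΓ_{νβα} + g^{κλ}(Γ_{νκα}Γ_{μλβ} − Γ_{μκα}Γ_{νλβ}). -/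
def Riem (c : Pt → ℝ) (μ ν α β : Fin 4) (x : Pt) : ℝ :=
  pd (fun y => Gamlow c μ β α y) ν x - pd (fun y => Gamlow c ν β α y) μ x
    + ∑ κ, ∑ l, gInv c κ l x
      * (Gamlow c ν κ α x * Gamlow c μ l β x - Gamlow c μ κ α x * Gamlow c ν l β x)

/-! Off its time–time entry the metric is constant, so a Christoffel symbol Γ_{αβγ} vanishes
identically as soon as two of its indices are spatial; the others are Γ_{0j0} = c∂_jc and
Γ_{i00} = Γ_{00i} = −c∂_ic. Hence every term of R_{μναβ} vanishes when ν, α, β are spatial, while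
R_{0i0j} = ∂_i(c∂_jc) + g^{00}Γ_{i00}Γ_{00j} = ∂_ic∂_jc + c∂²_{ij}c − ∂_ic∂_jc. -/

open Filter Topology

lemma pd_congr_of_eventuallyEq {f g : Pt → ℝ} {x : Pt} (h : f =ᶠ[𝓝 x] g) (α : Fin 4) :
    pd f α x = pd g α x := by
  rw [pd, pd, h.fderiv_eq]

lemma pd_const (a : ℝ) (α : Fin 4) (x : Pt) : pd (fun _ => a) α x = 0 := by
  simp [pd]

lemma pd_mul {f g : Pt → ℝ} {x : Pt} (hf : DifferentiableAt ℝ f x)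
    (hg : DifferentiableAt ℝ g x) (α : Fin 4) :
    pd (fun y => f y * g y) α x = pd f α x * g x + f x * pd g α x := by
  simp only [pd, fderiv_fun_mul hf hg, add_apply, smul_apply, smul_eq_mul]
  ring

lemma differentiableAt_pd {c : Pt → ℝ} {x : Pt} (hc : ContDiffAt ℝ 2 c x) (α : Fin 4) :
    DifferentiableAt ℝ (pd c α) x :=
  ((hc.fderiv_right (m := 1) le_rfl).clm_apply contDiffAt_const).differentiableAt one_ne_zero

lemma gMat_eq_const {c : Pt → ℝ} {α β : Fin 4} (h : α ≠ 0 ∨ β ≠ 0) :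
    (fun y => gMat c α β y) = fun _ => if α = β then 1 else 0 := by
  funext y
  rcases eq_or_ne α β with rfl | hαβ
  · simp [gMat, or_self_iff.mp h]
  · simp [gMat, hαβ]

lemma pd_gMat_of_ne_zero {c : Pt → ℝ} {α β : Fin 4} (h : α ≠ 0 ∨ β ≠ 0) (δ : Fin 4) (x : Pt) :
    pd (fun y => gMat c α β y) δ x = 0 := by
  rw [gMat_eq_const h, pd_const]

lemma pd_gMat_zero_zero {c : Pt → ℝ} {x : Pt} (hc : DifferentiableAt ℝ c x) (δ : Fin 4) :
    pd (fun y => gMat c 0 0 y) δ x = -2 * c x * pd c δ x := by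
  have : (fun y => gMat c 0 0 y) = fun y => -1 * (c y * c y) := by
    funext y; simp only [gMat, if_pos]; ring
  rw [this, pd_mul (g := fun y => c y * c y) (differentiableAt_const _) (hc.mul hc), pd_mul hc hc,
    pd_const]
  ring

lemma Gamlow_eq_zero {c : Pt → ℝ} {α β γ : Fin 4}
    (hαβ : α ≠ 0 ∨ β ≠ 0) (hβγ : β ≠ 0 ∨ γ ≠ 0) (hαγ : α ≠ 0 ∨ γ ≠ 0) (x : Pt) :
    Gamlow c α β γ x = 0 := by
  simp [Gamlow, pd_gMat_of_ne_zero, hαβ, hβγ, hαγ]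

lemma Gamlow_spatial_zero_zero {c : Pt → ℝ} {x : Pt} (hc : DifferentiableAt ℝ c x) {i : Fin 4}
    (hi : i ≠ 0) : Gamlow c i 0 0 x = -(c x * pd c i x) := by
  simp only [Gamlow, pd_gMat_zero_zero hc, pd_gMat_of_ne_zero (Or.inl hi)]
  ring

lemma Gamlow_zero_zero_spatial {c : Pt → ℝ} {x : Pt} (hc : DifferentiableAt ℝ c x) {j : Fin 4}
    (hj : j ≠ 0) : Gamlow c 0 0 j x = -(c x * pd c j x) := by
  simp only [Gamlow, pd_gMat_zero_zero hc, pd_gMat_of_ne_zero (Or.inr hj)]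
  ring

lemma Gamlow_zero_spatial_zero {c : Pt → ℝ} {x : Pt} (hc : DifferentiableAt ℝ c x) {j : Fin 4}
    (hj : j ≠ 0) : Gamlow c 0 j 0 x = c x * pd c j x := by
  simp only [Gamlow, pd_gMat_zero_zero hc, pd_gMat_of_ne_zero (Or.inr hj),
    pd_gMat_of_ne_zero (Or.inl hj)]
  ring

lemma pd_Gamlow_eq_zero {c : Pt → ℝ} {α β γ : Fin 4}
    (hαβ : α ≠ 0 ∨ β ≠ 0) (hβγ : β ≠ 0 ∨ γ ≠ 0) (hαγ : α ≠ 0 ∨ γ ≠ 0) (δ : Fin 4) (x : Pt) :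
    pd (fun y => Gamlow c α β γ y) δ x = 0 := by
  simp only [Gamlow_eq_zero hαβ hβγ hαγ, pd_const]

lemma sum_gInv_mul_eq_of_eq_zero {c : Pt → ℝ} {x : Pt} {F : Fin 4 → Fin 4 → ℝ}
    (hF : ∀ κ l, κ ≠ 0 → F κ l = 0) :
    ∑ κ, ∑ l, gInv c κ l x * F κ l = -((c x) ^ 2)⁻¹ * F 0 0 := by
  rw [Finset.sum_eq_single 0 (fun κ _ hκ => by simp [hF κ _ hκ]) (by simp),
    Finset.sum_eq_single 0 (fun l _ hl => by simp [gInv, Ne.symm hl]) (by simp)]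
  simp [gInv]

lemma Riem_eq_zero {c : Pt → ℝ} {μ ν α β : Fin 4} (hν : ν ≠ 0) (hα : α ≠ 0) (hβ : β ≠ 0)
    (x : Pt) : Riem c μ ν α β x = 0 := by
  simp [Riem, Gamlow_eq_zero, pd_const, hν, hα, hβ]

lemma Riem_zero_spatial_zero_spatial {c : Pt → ℝ} {x : Pt} (hc : ContDiffAt ℝ 2 c x)
    (hcx : c x ≠ 0) {i j : Fin 4} (hi : i ≠ 0) (hj : j ≠ 0) :
    Riem c 0 i 0 j x = c x * pd (fun y => pd c j y) i x := by
  have hdiff : ∀ᶠ y in 𝓝 x, DifferentiableAt ℝ c y :=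
    (hc.eventually (by simp)).mono fun y hy => hy.differentiableAt two_ne_zero
  have hΓ : (fun y => Gamlow c 0 j 0 y) =ᶠ[𝓝 x] fun y => c y * pd c j y :=
    hdiff.mono fun y hy => Gamlow_zero_spatial_zero hy hj
  have hquad : ∑ κ, ∑ l, gInv c κ l x
      * (Gamlow c i κ 0 x * Gamlow c 0 l j x - Gamlow c 0 κ 0 x * Gamlow c i l j x)
      = -(pd c i x * pd c j x) := by
    rw [sum_gInv_mul_eq_of_eq_zero fun κ l hκ => by simp [Gamlow_eq_zero, hi, hj, hκ],
      Gamlow_eq_zero (Or.inl hi) (Or.inr hj) (Or.inl hi),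
      Gamlow_spatial_zero_zero hdiff.self_of_nhds hi, Gamlow_zero_zero_spatial hdiff.self_of_nhds hj]
    field_simp
    ring
  rw [Riem, pd_congr_of_eventuallyEq hΓ, pd_mul hdiff.self_of_nhds (differentiableAt_pd hc j),
    pd_Gamlow_eq_zero (Or.inl hi) (Or.inl hj) (Or.inl hi), hquad]
  ring

/-- Equations (2.23)–(2.24): for g = diag(−c²,1,1,1) the only non-vanishing
curvature components (up to symmetries) are R_{0i0j} = c∂²_{ij}c. -/
theorem curvature_of_acoustic_metric
    (U : Set Pt) (hU : IsOpen U) (c : Pt → ℝ)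
    (hc : ContDiffOn ℝ (⊤ : ℕ∞) c U) (hcpos : ∀ x ∈ U, 0 < c x) :
    ∀ x ∈ U, ∀ i j k l : Fin 4, i ≠ 0 → j ≠ 0 → k ≠ 0 → l ≠ 0 →
      Riem c 0 i 0 j x = c x * pd (fun y => pd c j y) i x ∧
      Riem c i j k l x = 0 ∧
      Riem c 0 i j k x = 0 := by
  intro x hx i j k l hi hj hk hl
  have hcx : ContDiffAt ℝ 2 c x :=
    (hc.contDiffAt (hU.mem_nhds hx)).of_le (by norm_cast)
  exact ⟨Riem_zero_spatial_zero_spatial hcx (hcpos x hx).ne' hi hj,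
    Riem_eq_zero hj hk hl x, Riem_eq_zero hi hj hk x⟩
end
end

section
/- With the acoustic geometry setup below, the spatial components of L satisfy, for each i ∈ {1,2,3}: L(Lⁱ) = c^{−1}(Lc)·Lⁱ − c·ĝ^{iβ}∂_βc on U, where ĝ^{αβ} := g^{αβ} + (2μ)^{−1}(L^αL̄^β + L̄^αL^β). -/
noncomputable section

open scoped BigOperators

/-!
Differentiating the eikonal equation `(∂_t u / c)² = |∇u|²` and using the symmetry of the
Hessian of `u` gives `L(∂_β u) = c⁻¹ ∂_t u ∂_β c`. As `Lⁱ = -c² ∂_i u / ∂_t u`, the Leibniz rule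
then yields `L Lⁱ = c⁻¹ (2 Lc - ∂_t c) Lⁱ - c ∂_i c`. On the other side `L̄ = c⁻² μ (2 ∂_t - L)`,
so `ĝ^{iβ} ∂_β c = ∂_i c + c⁻² Lⁱ (∂_t c - Lc)`, and the two expressions agree.
-/

theorem pd_eq_fderiv (f : Pt → ℝ) (α : Fin 4) (x : Pt) :
    pd f α x = fderiv ℝ f x (Pi.single α 1) := rfl

section Calculus

variable {f : Pt → ℝ} {x : Pt}

theorem pd_congr_of_eqOn {U : Set Pt} (hU : IsOpen U) {g : Pt → ℝ} (hfg : Set.EqOn f g U)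
    (hx : x ∈ U) (α : Fin 4) : pd f α x = pd g α x := by
  rw [pd, pd, (Filter.eventuallyEq_of_mem (hU.mem_nhds hx) hfg).fderiv_eq]

theorem pd_pd_eq_fderiv_fderiv (hf : DifferentiableAt ℝ (fderiv ℝ f) x) (α β : Fin 4) :
    pd (pd f β) α x = fderiv ℝ (fderiv ℝ f) x (Pi.single α 1) (Pi.single β 1) := by
  change fderiv ℝ (fun y => fderiv ℝ f y (Pi.single β 1)) x _ = _
  simp [fderiv_clm_apply hf (differentiableAt_const _)]

theorem differentiableAt_pd_s10 (hf : ContDiffAt ℝ 2 f x) (β : Fin 4) :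
    DifferentiableAt ℝ (pd f β) x :=
  ((hf.fderiv_right (m := 1) le_rfl).differentiableAt one_ne_zero).clm_apply
    (differentiableAt_const _)

theorem pd_pd_comm (hf : ContDiffAt ℝ 2 f x) (α β : Fin 4) :
    pd (pd f β) α x = pd (pd f α) β x := by
  have hf' := (hf.fderiv_right (m := 1) le_rfl).differentiableAt one_ne_zero
  rw [pd_pd_eq_fderiv_fderiv hf', pd_pd_eq_fderiv_fderiv hf']
  exact hf.isSymmSndFDerivAt (by simp [minSmoothness_of_isRCLikeNormedField]) _ _

end Calculus

section DirectionalDerivative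

variable (V : Pt → Fin 4 → ℝ) {f g : Pt → ℝ} {x : Pt}

theorem vApp_eq_fderiv : vApp V f x = fderiv ℝ f x (V x) := by
  conv_rhs => rw [pi_eq_sum_univ' (V x)]
  simp [vApp, pd, map_sum]

theorem vApp_neg : vApp V (fun y => -f y) x = -vApp V f x := by
  simp [vApp_eq_fderiv, fderiv_fun_neg]

theorem vApp_mul (hf : DifferentiableAt ℝ f x) (hg : DifferentiableAt ℝ g x) :
    vApp V (fun y => f y * g y) x = vApp V f x * g x + f x * vApp V g x := by
  simp only [vApp_eq_fderiv, fderiv_fun_mul hf hg, add_apply, smul_apply, smul_eq_mul]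
  ring

theorem vApp_pow (hf : DifferentiableAt ℝ f x) (n : ℕ) :
    vApp V (fun y => f y ^ n) x = n * f x ^ (n - 1) * vApp V f x := by
  simp [vApp_eq_fderiv, fderiv_fun_pow n hf]

theorem vApp_inv (hf : DifferentiableAt ℝ f x) (hf0 : f x ≠ 0) :
    vApp V (fun y => (f y)⁻¹) x = -vApp V f x / f x ^ 2 := by
  rw [vApp_eq_fderiv, vApp_eq_fderiv, show (fun y => (f y)⁻¹) = (fun t : ℝ => t⁻¹) ∘ f from rfl,
    ((hasFDerivAt_inv hf0).comp x hf.hasFDerivAt).fderiv]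
  simp only [ContinuousLinearMap.comp_apply, ContinuousLinearMap.toSpanSingleton_apply, smul_eq_mul]
  ring

theorem vApp_div (hf : DifferentiableAt ℝ f x) (hg : DifferentiableAt ℝ g x) (hg0 : g x ≠ 0) :
    vApp V (fun y => f y / g y) x = (vApp V f x * g x - f x * vApp V g x) / g x ^ 2 := by
  simp only [div_eq_mul_inv]
  rw [vApp_mul V (g := fun y => (g y)⁻¹) hf (hg.inv hg0), vApp_inv V hg hg0]
  field_simp
  ring

end DirectionalDerivative

section Frame

variable {c u : Pt → ℝ} {y : Pt}

theorem invDens_eq : invDens c u y = c y ^ 2 / pd u 0 y := by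
  rw [invDens, mul_inv, inv_inv, div_eq_mul_inv]

theorem Lvec_zero (hc0 : c y ≠ 0) (hu0 : pd u 0 y ≠ 0) : Lvec c u y 0 = 1 := by
  simp only [Lvec, invDens_eq, Lhat, gInv, ↓reduceIte, ite_mul, neg_mul, zero_mul,
    Finset.sum_ite_eq, Finset.mem_univ, neg_neg]
  field_simp

theorem sum_gInv_mul_of_ne_zero {i : Fin 4} (hi : i ≠ 0) (w : Fin 4 → ℝ) :
    ∑ β, gInv c i β y * w β = w i := by
  simp [gInv, hi]

theorem Lvec_of_ne_zero {i : Fin 4} (hi : i ≠ 0) :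
    Lvec c u y i = -(c y ^ 2 * pd u i y / pd u 0 y) := by
  rw [Lvec, Lhat, sum_gInv_mul_of_ne_zero hi, invDens_eq]
  ring

theorem Lbar_eq (α : Fin 4) :
    Lbar c u y α
      = (c y ^ 2)⁻¹ * invDens c u y * (2 * (if α = 0 then 1 else 0) - Lvec c u y α) := by
  simp only [Lbar, Tvec, That]
  ring

theorem sum_ghat_mul_of_ne_zero (hc0 : c y ≠ 0) (hu0 : pd u 0 y ≠ 0) {i : Fin 4} (hi : i ≠ 0)
    (w : Fin 4 → ℝ) :
    ∑ β, ghat c u i β y * w β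
      = w i + (c y ^ 2)⁻¹ * Lvec c u y i * (w 0 - ∑ β, Lvec c u y β * w β) := by
  have hLbar : ∑ β, Lbar c u y β * w β
      = (c y ^ 2)⁻¹ * invDens c u y * (2 * w 0 - ∑ β, Lvec c u y β * w β) := by
    simp [Lbar_eq, mul_sub, sub_mul, Finset.sum_sub_distrib, Finset.mul_sum, mul_assoc]
  have hμ : invDens c u y ≠ 0 := by rw [invDens_eq]; positivity
  have hsplit : ∀ β, (2 * invDens c u y)⁻¹ *
      (Lvec c u y i * Lbar c u y β + Lbar c u y i * Lvec c u y β) * w β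
        = (2 * invDens c u y)⁻¹ * Lvec c u y i * (Lbar c u y β * w β)
          + (2 * invDens c u y)⁻¹ * Lbar c u y i * (Lvec c u y β * w β) := fun β => by ring
  simp only [ghat, add_mul, Finset.sum_add_distrib, sum_gInv_mul_of_ne_zero hi, hsplit,
    ← Finset.mul_sum]
  rw [hLbar, Lbar_eq i, if_neg hi]
  field_simp
  ring

theorem sum_gInv_mul_pd_mul_pd_eq_zero_iff (hc0 : c y ≠ 0) :
    ∑ α, ∑ β, gInv c α β y * pd u α y * pd u β y = 0
      ↔ pd u 0 y ^ 2 = c y ^ 2 * (pd u 1 y ^ 2 + pd u 2 y ^ 2 + pd u 3 y ^ 2) := by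
  have h : ∑ α, ∑ β, gInv c α β y * pd u α y * pd u β y = (c y ^ 2)⁻¹ *
      (c y ^ 2 * (pd u 1 y ^ 2 + pd u 2 y ^ 2 + pd u 3 y ^ 2) - pd u 0 y ^ 2) := by
    simp only [gInv, ite_mul, neg_mul, one_mul, zero_mul, Finset.sum_ite_eq, Finset.mem_univ,
      ↓reduceIte, Fin.sum_univ_four, one_ne_zero, Fin.reduceEq]
    field_simp
    ring
  rw [h, mul_eq_zero, sub_eq_zero, or_iff_right (by positivity), eq_comm]

theorem vApp_Lvec (hc0 : c y ≠ 0) (hu0 : pd u 0 y ≠ 0) (f : Pt → ℝ) :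
    vApp (Lvec c u) f y = pd f 0 y - c y ^ 2 / pd u 0 y *
      (pd u 1 y * pd f 1 y + pd u 2 y * pd f 2 y + pd u 3 y * pd f 3 y) := by
  simp only [vApp, Fin.sum_univ_four, Lvec_zero hc0 hu0,
    Lvec_of_ne_zero (show (1 : Fin 4) ≠ 0 by decide),
    Lvec_of_ne_zero (show (2 : Fin 4) ≠ 0 by decide),
    Lvec_of_ne_zero (show (3 : Fin 4) ≠ 0 by decide)]
  ring

end Frame

theorem vApp_Lvec_pd_of_eikonal {U : Set Pt} (hU : IsOpen U) {c u : Pt → ℝ}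
    (heik : Set.EqOn (fun y => pd u 0 y ^ 2)
      (fun y => c y ^ 2 * (pd u 1 y ^ 2 + pd u 2 y ^ 2 + pd u 3 y ^ 2)) U) {x : Pt} (hx : x ∈ U)
    (hc : DifferentiableAt ℝ c x) (hc0 : c x ≠ 0) (hu : ContDiffAt ℝ 2 u x) (hu0 : pd u 0 x ≠ 0)
    (β : Fin 4) : vApp (Lvec c u) (pd u β) x = pd u 0 x * pd c β x / c x := by
  have hψ := differentiableAt_pd_s10 hu
  have hd := pd_congr_of_eqOn hU heik hx β
  rw [pd_eq_fderiv (fun y => pd u 0 y ^ 2), pd_eq_fderiv (fun y => c y ^ 2 * _)] at hd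
  simp (disch := fun_prop) only [fderiv_fun_add, fderiv_fun_mul, fderiv_fun_pow] at hd
  simp only [add_apply, smul_apply, smul_eq_mul, nsmul_eq_mul, ← pd_eq_fderiv,
    pd_pd_comm hu β] at hd
  have hx0 : pd u 0 x ^ 2 = c x ^ 2 * (pd u 1 x ^ 2 + pd u 2 x ^ 2 + pd u 3 x ^ 2) := heik hx
  rw [vApp_Lvec hc0 hu0]
  field_simp
  linear_combination (c x / 2) * hd - pd c β x * hx0

/-- Equation (2.42) of Lemma 2.10: the transport equation
LLⁱ = c⁻¹(Lc)Lⁱ − c ĝ^{iβ}∂_βc for the spatial components of L. -/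
theorem transport_equation_of_Li
    (U : Set Pt) (hU : IsOpen U) (c u : Pt → ℝ)
    (hc : ContDiffOn ℝ (⊤ : ℕ∞) c U) (hcpos : ∀ x ∈ U, 0 < c x)
    (hu : ContDiffOn ℝ (⊤ : ℕ∞) u U)
    (heik : ∀ x ∈ U, ∑ α, ∑ β, gInv c α β x * pd u α x * pd u β x = 0)
    (hut : ∀ x ∈ U, 0 < pd u 0 x) :
    ∀ x ∈ U, ∀ i : Fin 4, i ≠ 0 →
      vApp (Lvec c u) (fun y => Lvec c u y i) x
        = (c x)⁻¹ * vApp (Lvec c u) c x * Lvec c u x i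
          - c x * ∑ β, ghat c u i β x * pd c β x := by
  intro x hx i hi
  have hc0 : c x ≠ 0 := (hcpos x hx).ne'
  have hu0 : pd u 0 x ≠ 0 := (hut x hx).ne'
  have hcx : DifferentiableAt ℝ c x :=
    (hc.contDiffAt (hU.mem_nhds hx)).differentiableAt (by simp)
  have hux : ContDiffAt ℝ 2 u x := (hu.contDiffAt (hU.mem_nhds hx)).of_le
    (WithTop.coe_le_coe.mpr le_top : ((2 : ℕ∞) : WithTop ℕ∞) ≤ _)
  have hψ := differentiableAt_pd_s10 hux
  have hLψ := vApp_Lvec_pd_of_eikonal hU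
    (fun y hy => (sum_gInv_mul_pd_mul_pd_eq_zero_iff (hcpos y hy).ne').1 (heik y hy))
    hx hcx hc0 hux hu0
  have hLi : (fun y => Lvec c u y i) = fun y => -(c y ^ 2 * pd u i y / pd u 0 y) :=
    funext fun y => Lvec_of_ne_zero hi
  rw [hLi, vApp_neg, vApp_div _ ((hcx.fun_pow 2).fun_mul (hψ i)) (hψ 0) hu0,
    vApp_mul _ (hcx.fun_pow 2) (hψ i), vApp_pow _ hcx, hLψ, hLψ,
    sum_ghat_mul_of_ne_zero hc0 hu0 hi, ← vApp, Lvec_of_ne_zero hi]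
  field_simp
  ring
end
end
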